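/- Let T be a polynomially Riesz operator on a complex Banach space X with minimal polynomial m(z) = (z-λ₁)^{j₁} ⋯ (z-λ_k)^{j_k}. Then the essential spectrum of T equals the zero set of m, i.e., σ_e(T) = {λ₁, …, λ_k}. -/

import Mathlib

open Polynomial

/-- The essential spectrum of `T`: the set of `z : ℂ` such that `z - T` is not invertible
modulo compact operators (i.e. the spectrum of the image of `T` in the Calkin algebra). -/
noncomputable def essSpectrum {X : Type*} [NormedAddCommGroup X] [NormedSpace ℂ X]
    (T : X →L[ℂ] X) : Set ℂ :=
  {z | ¬ ∃ S : X →L[ℂ] X,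
      IsCompactOperator (⇑((z • (1 : X →L[ℂ] X) - T) * S - 1)) ∧
      IsCompactOperator (⇑(S * (z • (1 : X →L[ℂ] X) - T) - 1))}

/-- `T` is a Riesz operator: its image in the Calkin algebra is quasinilpotent,
equivalently its essential spectrum is contained in `{0}`. -/
noncomputable def IsRieszOp {X : Type*} [NormedAddCommGroup X] [NormedSpace ℂ X]
    (T : X →L[ℂ] X) : Prop :=
  essSpectrum T ⊆ {0}


set_option linter.unusedSectionVars false

section
variable (X : Type*) [NormedAddCommGroup X] [NormedSpace ℂ X] [CompleteSpace X]

noncomputable abbrev KK : Submodule ℂ (X →L[ℂ] X) := compactOperator (RingHom.id ℂ) X X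

instance : IsClosed ((KK X : Set (X →L[ℂ] X))) := isClosed_setOf_isCompactOperator

noncomputable abbrev QQ := (X →L[ℂ] X) ⧸ (KK X)

variable {X}

lemma KK.mul_mem_left (g : X →L[ℂ] X) {f : X →L[ℂ] X} (hf : f ∈ KK X) : g * f ∈ KK X := by
  have : IsCompactOperator (⇑g ∘ ⇑f) := IsCompactOperator.clm_comp hf g
  exact this

lemma KK.mul_mem_right (g : X →L[ℂ] X) {f : X →L[ℂ] X} (hf : f ∈ KK X) : f * g ∈ KK X := by
  have : IsCompactOperator (⇑f ∘ ⇑g) := IsCompactOperator.comp_clm hf g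
  exact this

local notation "πq" => (Submodule.Quotient.mk : (X →L[ℂ] X) → QQ X)

noncomputable instance QQ.instMul : Mul (QQ X) :=
  ⟨fun a b => Quotient.liftOn₂' a b (fun x y => πq (x * y)) (by
    intro x y x' y' hx hy
    have hx' : x - x' ∈ KK X := (Submodule.quotientRel_def _).mp hx
    have hy' : y - y' ∈ KK X := (Submodule.quotientRel_def _).mp hy
    refine (Submodule.Quotient.eq _).mpr ?_
    have : x * y - x' * y' = x * (y - y') + (x - x') * y' := by noncomm_ring
    rw [this]
    exact (KK X).add_mem (KK.mul_mem_left x hy') (KK.mul_mem_right y' hx'))⟩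

@[simp] lemma QQ.mk_mul (x y : X →L[ℂ] X) : (πq x) * (πq y) = πq (x * y) := rfl

noncomputable instance QQ.instOne : One (QQ X) := ⟨πq 1⟩

@[simp] lemma QQ.mk_one : (πq 1) = (1 : QQ X) := rfl

noncomputable instance QQ.instRing : Ring (QQ X) where
  __ := (inferInstance : AddCommGroup (QQ X))
  mul_assoc a b c := by
    induction a using Quotient.inductionOn'
    induction b using Quotient.inductionOn'
    induction c using Quotient.inductionOn'
    show πq _ = πq _
    rw [mul_assoc]
  one_mul a := by
    induction a using Quotient.inductionOn'
    show πq _ = πq _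
    rw [one_mul]
  mul_one a := by
    induction a using Quotient.inductionOn'
    show πq _ = πq _
    rw [mul_one]
  left_distrib a b c := by
    induction a using Quotient.inductionOn'
    induction b using Quotient.inductionOn'
    induction c using Quotient.inductionOn'
    show πq _ = πq _ + πq _
    rw [← Submodule.Quotient.mk_add, mul_add]
  right_distrib a b c := by
    induction a using Quotient.inductionOn'
    induction b using Quotient.inductionOn'
    induction c using Quotient.inductionOn'
    show πq _ = πq _ + πq _
    rw [← Submodule.Quotient.mk_add, add_mul]
  zero_mul a := by
    induction a using Quotient.inductionOn'
    show πq _ = πq _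
    rw [zero_mul]
  mul_zero a := by
    induction a using Quotient.inductionOn'
    show πq _ = πq _
    rw [mul_zero]

end

section
variable {X : Type*} [NormedAddCommGroup X] [NormedSpace ℂ X] [CompleteSpace X]

local notation "πq" => (Submodule.Quotient.mk : (X →L[ℂ] X) → QQ X)

noncomputable instance QQ.instNormedRing : NormedRing (QQ X) where
  __ := (inferInstance : NormedAddCommGroup (QQ X))
  __ := (inferInstance : Ring (QQ X))
  dist_eq := fun x y => by rw [dist_eq_norm, neg_add_eq_sub, norm_sub_rev]
  norm_mul_le a b := by
    have key : ∀ ε : ℝ, 0 < ε → ‖a * b‖ ≤ (‖a‖ + ε) * (‖b‖ + ε) := by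
      intro ε hε
      obtain ⟨x, hx, hxn⟩ := Submodule.Quotient.norm_mk_lt a hε
      obtain ⟨y, hy, hyn⟩ := Submodule.Quotient.norm_mk_lt b hε
      have : a * b = πq (x * y) := by rw [← hx, ← hy]; rfl
      rw [this]
      calc ‖πq (x * y)‖ ≤ ‖x * y‖ := Submodule.Quotient.norm_mk_le _ _
        _ ≤ ‖x‖ * ‖y‖ := norm_mul_le x y
        _ ≤ (‖a‖ + ε) * (‖b‖ + ε) := by
            exact mul_le_mul hxn.le hyn.le (norm_nonneg y) (by positivity)
    have h0 : Filter.Tendsto (fun ε : ℝ => (‖a‖ + ε) * (‖b‖ + ε)) (nhdsWithin 0 (Set.Ioi 0))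
        (nhds (‖a‖ * ‖b‖)) := by
      have : Filter.Tendsto (fun ε : ℝ => (‖a‖ + ε) * (‖b‖ + ε)) (nhds 0)
          (nhds ((‖a‖ + 0) * (‖b‖ + 0))) := by
        exact ((continuous_const.add continuous_id).mul (continuous_const.add continuous_id)).tendsto 0
      simpa using this.mono_left nhdsWithin_le_nhds
    exact ge_of_tendsto h0 (Filter.eventually_of_mem self_mem_nhdsWithin fun ε hε => key ε hε)

noncomputable instance QQ.instAlgebra : Algebra ℂ (QQ X) :=
  Algebra.ofModule
    (fun c a b => by
      induction a using Quotient.inductionOn'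
      induction b using Quotient.inductionOn'
      show (c • πq _) * πq _ = c • (πq _ * πq _)
      rw [← Submodule.Quotient.mk_smul, QQ.mk_mul, QQ.mk_mul, ← Submodule.Quotient.mk_smul,
        smul_mul_assoc])
    (fun c a b => by
      induction a using Quotient.inductionOn'
      induction b using Quotient.inductionOn'
      show πq _ * (c • πq _) = c • (πq _ * πq _)
      rw [← Submodule.Quotient.mk_smul, QQ.mk_mul, QQ.mk_mul, ← Submodule.Quotient.mk_smul,
        mul_smul_comm])

noncomputable instance QQ.instNormedAlgebra : NormedAlgebra ℂ (QQ X) where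
  toAlgebra := QQ.instAlgebra
  norm_smul_le r x := norm_smul_le r x

/-- The quotient map to the Calkin algebra as an algebra homomorphism. -/
noncomputable def calkinMk : (X →L[ℂ] X) →ₐ[ℂ] QQ X where
  toFun := πq
  map_one' := rfl
  map_mul' x y := rfl
  map_zero' := rfl
  map_add' x y := rfl
  commutes' c := by
    show πq (algebraMap ℂ _ c) = algebraMap ℂ (QQ X) c
    rw [Algebra.algebraMap_eq_smul_one, Algebra.algebraMap_eq_smul_one,
      Submodule.Quotient.mk_smul]
    rfl

end

section
variable {X : Type*} [NormedAddCommGroup X] [NormedSpace ℂ X] [CompleteSpace X]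

local notation "πq" => (Submodule.Quotient.mk : (X →L[ℂ] X) → QQ X)

lemma essSpectrum_eq_spectrum (T : X →L[ℂ] X) :
    essSpectrum T = spectrum ℂ (calkinMk T : QQ X) := by
  ext z
  rw [essSpectrum, Set.mem_setOf_eq, spectrum.mem_iff, not_iff_not]
  have hA : algebraMap ℂ (QQ X) z - calkinMk T = calkinMk (z • (1 : X →L[ℂ] X) - T) := by
    rw [map_sub, map_smul, map_one, Algebra.algebraMap_eq_smul_one]
  set A := z • (1 : X →L[ℂ] X) - T with hAdef
  constructor
  · rintro ⟨S, h1, h2⟩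
    have h1' : calkinMk A * calkinMk S - 1 = 0 := by
      rw [← map_mul, ← map_one (calkinMk (X := X)), ← map_sub]
      exact (Submodule.Quotient.mk_eq_zero _).mpr h1
    have h2' : calkinMk S * calkinMk A - 1 = 0 := by
      rw [← map_mul, ← map_one (calkinMk (X := X)), ← map_sub]
      exact (Submodule.Quotient.mk_eq_zero _).mpr h2
    rw [hA]
    exact ⟨⟨calkinMk A, calkinMk S, sub_eq_zero.mp h1', sub_eq_zero.mp h2'⟩, rfl⟩
  · intro hu
    rw [hA] at hu
    obtain ⟨u, hu⟩ := hu
    obtain ⟨S, hS⟩ := Submodule.Quotient.mk_surjective (KK X) (↑u⁻¹ : QQ X)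
    refine ⟨S, ?_, ?_⟩
    · have : calkinMk (A * S - 1) = 0 := by
        rw [map_sub, map_mul, map_one]
        show calkinMk A * πq S - 1 = 0
        rw [hS, ← hu, u.mul_inv, sub_self]
      exact (Submodule.Quotient.mk_eq_zero _).mp this
    · have : calkinMk (S * A - 1) = 0 := by
        rw [map_sub, map_mul, map_one]
        show (πq S) * calkinMk A - 1 = 0
        rw [hS, ← hu, u.inv_mul, sub_self]
      exact (Submodule.Quotient.mk_eq_zero _).mp this

end


/-- The essential spectrum of a polynomially Riesz operator equals the zero set of its
minimal polynomial. -/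
theorem essSpectrum_eq_zeroSet_of_minimal_polynomial
    {X : Type*} [NormedAddCommGroup X] [NormedSpace ℂ X] [CompleteSpace X]
    (T : X →L[ℂ] X) (m : ℂ[X])
    (hmonic : m.Monic) (hriesz : IsRieszOp (aeval T m))
    (hmin : ∀ p : ℂ[X], IsRieszOp (aeval T p) → m ∣ p) :
    essSpectrum T = {z : ℂ | m.eval z = 0} := by
  by_cases h1 : IsCompactOperator (⇑(1 : X →L[ℂ] X))
  · -- trivial Calkin algebra: every operator is invertible modulo compacts
    have hempty : ∀ T' : X →L[ℂ] X, essSpectrum T' = ∅ := by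
      intro T'
      ext z
      simp only [essSpectrum, Set.mem_setOf_eq, Set.mem_empty_iff_false, iff_false, not_not]
      refine ⟨0, ?_, ?_⟩
      · have h : ((z • (1 : X →L[ℂ] X) - T') * 0 - 1) = -1 := by rw [mul_zero, zero_sub]
        rw [h]
        simpa [ContinuousLinearMap.coe_neg] using h1.neg
      · have h : ((0 : X →L[ℂ] X) * (z • (1 : X →L[ℂ] X) - T') - 1) = -1 := by rw [zero_mul, zero_sub]
        rw [h]
        simpa [ContinuousLinearMap.coe_neg] using h1.neg
    have h1r : IsRieszOp (aeval T (1 : ℂ[X])) := by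
      rw [IsRieszOp, hempty]
      exact Set.empty_subset _
    have hm1 : m = 1 := hmonic.eq_one_of_isUnit (isUnit_of_dvd_one (hmin 1 h1r))
    rw [hempty T, hm1]
    ext z
    simp
  · haveI : Nontrivial (QQ X) := by
      refine ⟨⟨1, 0, fun h => h1 ?_⟩⟩
      have : ((1 : X →L[ℂ] X) ∈ KK X) := (Submodule.Quotient.mk_eq_zero _).mp h
      exact this
    set a := calkinMk T with ha
    have hspec : ∀ p : ℂ[X], IsRieszOp (aeval T p) ↔ spectrum ℂ (aeval a p) ⊆ {0} := by
      intro p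
      rw [IsRieszOp, essSpectrum_eq_spectrum, ← Polynomial.aeval_algHom_apply]
    have hmT : spectrum ℂ (aeval a m) ⊆ {0} := (hspec m).mp hriesz
    rw [essSpectrum_eq_spectrum T, ← ha]
    have hsub : spectrum ℂ a ⊆ {z | m.eval z = 0} := by
      intro μ hμ
      have : m.eval μ ∈ spectrum ℂ (aeval a m) :=
        spectrum.subset_polynomial_aeval a m ⟨μ, hμ, rfl⟩
      simpa using hmT this
    refine Set.Subset.antisymm hsub ?_
    intro z hz
    by_contra hzs
    have hz' : m.eval z = 0 := hz
    obtain ⟨p, hp⟩ := Polynomial.dvd_iff_isRoot.mpr hz'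
    have hpm : p.Monic := (monic_X_sub_C z).of_mul_monic_left (hp ▸ hmonic)
    by_cases hdeg : 0 < p.degree
    · have hrp : IsRieszOp (aeval T p) := by
        rw [hspec, spectrum.map_polynomial_aeval_of_degree_pos a p hdeg]
        rintro w ⟨μ, hμ, rfl⟩
        have hmμ : m.eval μ = 0 := hsub hμ
        have hμz : μ ≠ z := fun h => hzs (h ▸ hμ)
        rw [hp] at hmμ
        simp only [eval_mul, eval_sub, eval_X, eval_C] at hmμ
        rcases mul_eq_zero.mp hmμ with h | h
        · exact absurd (sub_eq_zero.mp h) hμz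
        · simpa using h
      have hple : m.natDegree ≤ p.natDegree :=
        Polynomial.natDegree_le_of_dvd (hmin p hrp) hpm.ne_zero
      have hnd : m.natDegree = 1 + p.natDegree := by
        rw [hp, Polynomial.natDegree_mul (Polynomial.X_sub_C_ne_zero z) hpm.ne_zero,
          Polynomial.natDegree_X_sub_C]
      omega
    · have hp1 : p = 1 := by
        have h0 : p.natDegree = 0 := by
          rw [Polynomial.natDegree_eq_zero_iff_degree_le_zero]
          exact le_of_not_gt hdeg
        exact hpm.natDegree_eq_zero.mp h0
      rw [hp1, mul_one] at hp
      have hunit : IsUnit (algebraMap ℂ (QQ X) z - a) := spectrum.notMem_iff.mp hzs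
      have hu2 : IsUnit (aeval a m) := by
        rw [hp, map_sub, aeval_X, aeval_C, ← neg_sub]
        exact hunit.neg
      have hne : spectrum ℂ (aeval a m) = ∅ := by
        apply Set.eq_empty_iff_forall_notMem.mpr
        intro w hw
        have hw0 : w = 0 := hmT hw
        rw [hw0] at hw
        exact (spectrum.zero_mem_iff ℂ).mp hw hu2
      exact Set.not_nonempty_empty (hne ▸ spectrum.nonempty (aeval a m))
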